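/- arXiv:0709.3452 — 3 statements merged into one kernel-verified Lean document; each statement's English description precedes it below -/
import Mathlib

section
/- Let A be an artin algebra. The class of finitely generated Gorenstein-projective left A-modules is closed under extensions: if 0 → M' → M → M'' → 0 is a short exact sequence of finitely generated A-modules with M' and M'' Gorenstein-projective, then M is Gorenstein-projective. -/
open CategoryTheory DirectSum

universe u

/-- A left module `M` over `A` is **Gorenstein-projective** if it is the 0-th cocycle
of a totally acyclic complex of projective `A`-modules: an acyclic complex of projectives
such that both Hom-complexes `Hom_A(Q, P^•)` and `Hom_A(P^•, Q)` are exact for every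
projective module `Q`. -/
def IsGorensteinProjective (A : Type u) [Ring A] (M : Type u) [AddCommGroup M]
    [Module A M] : Prop :=
  ∃ (P : ℤ → ModuleCat.{u} A) (d : ∀ n : ℤ, P n ⟶ P (n + 1)),
    (∀ n : ℤ, Module.Projective A (P n)) ∧
    (∀ n : ℤ, LinearMap.range (d n).hom = LinearMap.ker (d (n + 1)).hom) ∧
    (∀ (Q : ModuleCat.{u} A), Module.Projective A Q →
      (∀ (n : ℤ) (f : Q ⟶ P (n + 1)), f ≫ d (n + 1) = 0 → ∃ g : Q ⟶ P n, g ≫ d n = f) ∧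
      (∀ (n : ℤ) (f : P (n + 1) ⟶ Q), d n ≫ f = 0 →
        ∃ g : P (n + 1 + 1) ⟶ Q, d (n + 1) ≫ g = f)) ∧
    Nonempty (M ≃ₗ[A] LinearMap.ker (d 0).hom)

/-- A finitely generated module `M` is **(finitely generated) Gorenstein-projective**
if it is the 0-th cocycle of a totally acyclic complex of finitely generated projective
`A`-modules, where total acyclicity is tested against finitely generated projectives. -/
def IsFgGorensteinProjective (A : Type u) [Ring A] (M : Type u) [AddCommGroup M]
    [Module A M] : Prop :=
  ∃ (P : ℤ → ModuleCat.{u} A) (d : ∀ n : ℤ, P n ⟶ P (n + 1)),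
    (∀ n : ℤ, Module.Finite A (P n)) ∧
    (∀ n : ℤ, Module.Projective A (P n)) ∧
    (∀ n : ℤ, LinearMap.range (d n).hom = LinearMap.ker (d (n + 1)).hom) ∧
    (∀ (Q : ModuleCat.{u} A), Module.Finite A Q → Module.Projective A Q →
      (∀ (n : ℤ) (f : Q ⟶ P (n + 1)), f ≫ d (n + 1) = 0 → ∃ g : Q ⟶ P n, g ≫ d n = f) ∧
      (∀ (n : ℤ) (f : P (n + 1) ⟶ Q), d n ≫ f = 0 →
        ∃ g : P (n + 1 + 1) ⟶ Q, d (n + 1) ≫ g = f)) ∧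
    Nonempty (M ≃ₗ[A] LinearMap.ker (d 0).hom)

/-- `M` has finite injective dimension over `A`: there is a finite injective
coresolution `0 → M → I^0 → I^1 → ⋯ → I^n → 0`. -/
def HasFiniteInjectiveDimension (A : Type u) [Ring A] (M : Type u) [AddCommGroup M]
    [Module A M] : Prop :=
  ∃ (n : ℕ) (I : ℕ → ModuleCat.{u} A) (d : ∀ i : ℕ, I i ⟶ I (i + 1)) (ι : M →ₗ[A] I 0),
    (∀ i, Module.Injective A (I i)) ∧
    Function.Injective ι ∧
    LinearMap.range ι = LinearMap.ker (d 0).hom ∧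
    (∀ i : ℕ, LinearMap.range (d i).hom = LinearMap.ker (d (i + 1)).hom) ∧
    (∀ i : ℕ, n < i → Subsingleton (I i))

/-- An artin algebra `A` is **Gorenstein** if the regular module `A` has finite injective
dimension both as a left and as a right `A`-module (right modules being left `Aᵐᵒᵖ`-modules). -/
def IsGorensteinAlgebra (A : Type u) [Ring A] : Prop :=
  HasFiniteInjectiveDimension A A ∧ HasFiniteInjectiveDimension Aᵐᵒᵖ Aᵐᵒᵖ

/-- A module is indecomposable if it is nonzero and admits no nontrivial direct sum
decomposition. -/
def IsIndecomposableModule (A : Type u) [Ring A] (M : Type u) [AddCommGroup M]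
    [Module A M] : Prop :=
  ¬ Subsingleton M ∧ ∀ (N₁ N₂ : Submodule A M), IsCompl N₁ N₂ → N₁ = ⊥ ∨ N₂ = ⊥

/-- An artin algebra is **CM-finite** if there are only finitely many isomorphism classes
of indecomposable finitely generated Gorenstein-projective modules. -/
def IsCMFinite (A : Type u) [Ring A] : Prop :=
  ∃ (m : ℕ) (G : Fin m → ModuleCat.{u} A),
    ∀ (M : ModuleCat.{u} A), IsFgGorensteinProjective A M → IsIndecomposableModule A M →
      ∃ i : Fin m, Nonempty (M ≃ₗ[A] G i)

/-- `X` is a direct sum of finitely generated Gorenstein-projective modules. -/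
def IsDirectSumOfFgGorensteinProjectives (A : Type u) [Ring A] (X : Type u)
    [AddCommGroup X] [Module A X] : Prop :=
  ∃ (ι : Type u) (M : ι → ModuleCat.{u} A),
    (∀ i, IsFgGorensteinProjective A (M i)) ∧ Nonempty (X ≃ₗ[A] ⨁ i : ι, (M i : Type u))

/-!
Take totally acyclic complexes `P'` and `P''` with `Z⁰ P' ≅ M'` and `Z⁰ P'' ≅ M''`. Lifting the
projection `P''⁻¹ → M''` to `M` turns the extension into a map `c : P''⁻² → M'` killing the
image of `d`, i.e. a cocycle representing its class in `Ext¹(M'', M')`. Since `Hom(P''•, Q)` and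
`Hom(Q, P'•)` are exact for every finitely generated projective `Q`, the composite
`P''⁻² → M' ⊆ P'⁰` extends, degree by degree in both directions, to maps `h : P''ⁿ → P'ⁿ⁺¹`
with `d h + h d = 0`. The complex `P' ⊕ P''` with differential `(x, y) ↦ (d x + h y, d y)` is
again totally acyclic, and its degree-zero cocycles are an extension of `M''` by `M'` with the
same class as `M`, hence isomorphic to `M`.
-/

namespace LinearMap

variable {R X Y Z : Type*}

theorem exists_comp_eq_of_injective_of_range_le [Semiring R] [AddCommMonoid X] [Module R X]
    [AddCommMonoid Y] [Module R Y] [AddCommMonoid Z] [Module R Z] {f : Y →ₗ[R] Z}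
    (hf : Function.Injective f) {v : X →ₗ[R] Z} (h : range v ≤ range f) :
    ∃ w : X →ₗ[R] Y, f ∘ₗ w = v :=
  ⟨(LinearEquiv.ofInjective f hf).symm.toLinearMap ∘ₗ v.codRestrict _ fun x => h ⟨x, rfl⟩, by
    ext x
    simp⟩

theorem exists_comp_eq_of_surjective_of_ker_le [Ring R] [AddCommGroup X] [Module R X]
    [AddCommGroup Y] [Module R Y] [AddCommGroup Z] [Module R Z] {u : X →ₗ[R] Y}
    (hu : Function.Surjective u) {v : X →ₗ[R] Z} (h : ker u ≤ ker v) :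
    ∃ w : Y →ₗ[R] Z, w ∘ₗ u = v :=
  ⟨(ker u).liftQ v h ∘ₗ (u.quotKerEquivOfSurjective hu).symm.toLinearMap, by
    ext x
    simp⟩

end LinearMap

theorem Int.exists_forall_rel_succ {T : ℤ → Sort*} (r : ∀ n, T n → T (n + 1) → Prop)
    (forward : ∀ n a b, r n a b → ∃ c, r (n + 1) b c)
    (backward : ∀ n b c, r (n + 1) b c → ∃ a, r n a b)
    (x : T (-1)) (y : T 0) (hxy : r (-1) x y) :
    ∃ s : ∀ n, T n, (∀ n, r n (s n) (s (n + 1))) ∧ s (-1) = x ∧ s 0 = y := by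
  choose next hnext using forward
  choose prev hprev using backward
  let up (k : ℕ) : (a : T k) ×' (b : T (k + 1)) ×' r k a b :=
    k.rec ⟨y, next _ x y hxy, hnext _ x y hxy⟩ fun _ p =>
      ⟨p.2.1, next _ _ _ p.2.2, hnext _ _ _ p.2.2⟩
  -- `Int.negSucc (k + 1) + 1` reduces to `Int.negSucc k`, so both halves are plain `Nat.rec`s.
  let down (k : ℕ) : (a : T (Int.negSucc k)) ×' (b : T (Int.negSucc k + 1)) ×' r _ a b :=
    k.rec ⟨x, y, hxy⟩ fun k p => ⟨prev _ _ _ p.2.2, p.1, hprev _ _ _ p.2.2⟩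
  refine ⟨fun | .ofNat k => (up k).1 | .negSucc k => (down k).1, fun n => ?_, rfl, rfl⟩
  match n with
  | .ofNat k => exact (up k).2.2
  | .negSucc 0 => exact (down 0).2.2
  | .negSucc (k + 1) => exact (down (k + 1)).2.2

structure FgTotallyAcyclicComplex (A : Type u) [Ring A] where
  P : ℤ → ModuleCat.{u} A
  d : ∀ n : ℤ, P n →ₗ[A] P (n + 1)
  finite : ∀ n, Module.Finite A (P n)
  projective : ∀ n, Module.Projective A (P n)
  range_eq_ker : ∀ n, LinearMap.range (d n) = LinearMap.ker (d (n + 1))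
  exists_lift : ∀ (Q : ModuleCat.{u} A) [Module.Finite A Q] [Module.Projective A Q]
    (n : ℤ) (f : Q →ₗ[A] P (n + 1)), d (n + 1) ∘ₗ f = 0 → ∃ g : Q →ₗ[A] P n, d n ∘ₗ g = f
  exists_extend : ∀ (Q : ModuleCat.{u} A) [Module.Finite A Q] [Module.Projective A Q]
    (n : ℤ) (f : P (n + 1) →ₗ[A] Q), f ∘ₗ d n = 0 →
      ∃ g : P (n + 1 + 1) →ₗ[A] Q, g ∘ₗ d (n + 1) = f

attribute [instance] FgTotallyAcyclicComplex.finite FgTotallyAcyclicComplex.projective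

theorem isFgGorensteinProjective_iff {A : Type u} [Ring A] {M : Type u} [AddCommGroup M]
    [Module A M] : IsFgGorensteinProjective A M ↔
      ∃ C : FgTotallyAcyclicComplex A, Nonempty (M ≃ₗ[A] LinearMap.ker (C.d 0)) := by
  constructor
  · rintro ⟨P, d, hfin, hproj, hex, htac, e⟩
    refine ⟨⟨P, fun n => (d n).hom, hfin, hproj, hex, fun Q _ _ n f hf => ?_,
      fun Q _ _ n f hf => ?_⟩, e⟩
    · obtain ⟨g, hg⟩ := (htac Q ‹_› ‹_›).1 n (ModuleCat.ofHom f) (ModuleCat.hom_ext hf)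
      exact ⟨g.hom, congrArg ModuleCat.Hom.hom hg⟩
    · obtain ⟨g, hg⟩ := (htac Q ‹_› ‹_›).2 n (ModuleCat.ofHom f) (ModuleCat.hom_ext hf)
      exact ⟨g.hom, congrArg ModuleCat.Hom.hom hg⟩
  · rintro ⟨C, e⟩
    refine ⟨C.P, fun n => ModuleCat.ofHom (C.d n), C.finite, C.projective, C.range_eq_ker,
      fun Q _ _ => ⟨fun n f hf => ?_, fun n f hf => ?_⟩, e⟩
    · obtain ⟨g, hg⟩ := C.exists_lift Q n f.hom (congrArg ModuleCat.Hom.hom hf)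
      exact ⟨ModuleCat.ofHom g, ModuleCat.hom_ext hg⟩
    · obtain ⟨g, hg⟩ := C.exists_extend Q n f.hom (congrArg ModuleCat.Hom.hom hf)
      exact ⟨ModuleCat.ofHom g, ModuleCat.hom_ext hg⟩

namespace FgTotallyAcyclicComplex

variable {A : Type u} [Ring A]

section Basic

variable (C : FgTotallyAcyclicComplex A)

theorem d_d (n : ℤ) (x : C.P n) : C.d (n + 1) (C.d n x) = 0 :=
  (C.range_eq_ker n).le ⟨x, rfl⟩

theorem d_comp_d (n : ℤ) : C.d (n + 1) ∘ₗ C.d n = 0 :=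
  LinearMap.ext (C.d_d n)

theorem exists_d_eq {n : ℤ} {y : C.P (n + 1)} (hy : C.d (n + 1) y = 0) : ∃ x, C.d n x = y :=
  (C.range_eq_ker n).ge hy

def toCycles (n : ℤ) : C.P n →ₗ[A] LinearMap.ker (C.d (n + 1)) :=
  (C.d n).codRestrict _ (C.d_d n)

@[simp]
theorem coe_toCycles (n : ℤ) (x : C.P n) : (C.toCycles n x : C.P (n + 1)) = C.d n x :=
  rfl

theorem toCycles_surjective (n : ℤ) : Function.Surjective (C.toCycles n) := fun y =>
  let ⟨x, hx⟩ := C.exists_d_eq y.2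
  ⟨x, Subtype.ext hx⟩

end Basic

section TwistedSum

variable (C₁ C₂ : FgTotallyAcyclicComplex A)

-- `h` is a chain map `C₂⟦-1⟧ ⟶ C₁` (the sign comes from the shift); `twistedSum` is its cone.
def IsTwisting (h : ∀ n, C₂.P n →ₗ[A] C₁.P (n + 1)) : Prop :=
  ∀ n, C₁.d (n + 1) ∘ₗ h n + h (n + 1) ∘ₗ C₂.d n = 0

variable {C₁ C₂} {h : ∀ n, C₂.P n →ₗ[A] C₁.P (n + 1)}

theorem IsTwisting.apply (hh : IsTwisting C₁ C₂ h) (n : ℤ) (y : C₂.P n) :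
    C₁.d (n + 1) (h n y) + h (n + 1) (C₂.d n y) = 0 :=
  LinearMap.congr_fun (hh n) y

variable (h) in
def twistedD (n : ℤ) : C₁.P n × C₂.P n →ₗ[A] C₁.P (n + 1) × C₂.P (n + 1) :=
  (C₁.d n ∘ₗ LinearMap.fst _ _ _ + h n ∘ₗ LinearMap.snd _ _ _).prod (C₂.d n ∘ₗ LinearMap.snd _ _ _)

@[simp]
theorem twistedD_apply (n : ℤ) (x : C₁.P n) (y : C₂.P n) :
    twistedD h n (x, y) = (C₁.d n x + h n y, C₂.d n y) :=
  rfl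

theorem range_twistedD (hh : IsTwisting C₁ C₂ h) (n : ℤ) :
    LinearMap.range (twistedD h n) = LinearMap.ker (twistedD h (n + 1)) := by
  apply le_antisymm
  · rintro _ ⟨⟨x, y⟩, rfl⟩
    simp [d_d, hh.apply]
  · rintro ⟨x, y⟩ hxy
    simp only [LinearMap.mem_ker, twistedD_apply, Prod.mk_eq_zero] at hxy
    obtain ⟨y₀, rfl⟩ := C₂.exists_d_eq hxy.2
    have hx : C₁.d (n + 1) (x - h n y₀) = 0 := by
      rw [map_sub, eq_neg_of_add_eq_zero_left hxy.1, eq_neg_of_add_eq_zero_left (hh.apply n y₀),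
        sub_self]
    obtain ⟨x₀, hx₀⟩ := C₁.exists_d_eq hx
    exact ⟨(x₀, y₀), by simp [hx₀]⟩

theorem exists_lift_twistedD (hh : IsTwisting C₁ C₂ h) (Q : ModuleCat.{u} A) [Module.Finite A Q]
    [Module.Projective A Q] (n : ℤ) (F : Q →ₗ[A] C₁.P (n + 1) × C₂.P (n + 1))
    (hF : twistedD h (n + 1) ∘ₗ F = 0) :
    ∃ G : Q →ₗ[A] C₁.P n × C₂.P n, twistedD h n ∘ₗ G = F := by
  have hF' q : C₁.d (n + 1) (F q).1 + h (n + 1) (F q).2 = 0 ∧ C₂.d (n + 1) (F q).2 = 0 :=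
    Prod.mk_eq_zero.mp (LinearMap.congr_fun hF q)
  obtain ⟨G₂, hG₂⟩ := C₂.exists_lift Q n (LinearMap.snd _ _ _ ∘ₗ F)
    (LinearMap.ext fun q => (hF' q).2)
  have hG₂' q : C₂.d n (G₂ q) = (F q).2 := LinearMap.congr_fun hG₂ q
  obtain ⟨G₁, hG₁⟩ := C₁.exists_lift Q n (LinearMap.fst _ _ _ ∘ₗ F - h n ∘ₗ G₂) <| by
    ext q
    have hq := hh.apply n (G₂ q)
    rw [hG₂'] at hq
    simp [eq_neg_of_add_eq_zero_left (hF' q).1, eq_neg_of_add_eq_zero_left hq]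
  have hG₁' q : C₁.d n (G₁ q) = (F q).1 - h n (G₂ q) := LinearMap.congr_fun hG₁ q
  refine ⟨G₁.prod G₂, LinearMap.ext fun q => ?_⟩
  simp [hG₁', hG₂']

theorem exists_extend_twistedD (hh : IsTwisting C₁ C₂ h) (Q : ModuleCat.{u} A)
    [Module.Finite A Q] [Module.Projective A Q] (n : ℤ)
    (F : C₁.P (n + 1) × C₂.P (n + 1) →ₗ[A] Q) (hF : F ∘ₗ twistedD h n = 0) :
    ∃ G : C₁.P (n + 1 + 1) × C₂.P (n + 1 + 1) →ₗ[A] Q, G ∘ₗ twistedD h (n + 1) = F := by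
  have hF' x y : F (C₁.d n x + h n y, C₂.d n y) = 0 := LinearMap.congr_fun hF (x, y)
  have hFxy x y : F (x, y) = F (x, 0) + F (0, y) := by
    rw [← map_add, Prod.mk_add_mk, add_zero, zero_add]
  obtain ⟨G₁, hG₁⟩ := C₁.exists_extend Q n (F ∘ₗ LinearMap.inl _ _ _) <| by
    ext x
    simpa using hF' x 0
  have hG₁' x : G₁ (C₁.d (n + 1) x) = F (x, 0) := LinearMap.congr_fun hG₁ x
  obtain ⟨G₂, hG₂⟩ := C₂.exists_extend Q n (F ∘ₗ LinearMap.inr _ _ _ - G₁ ∘ₗ h (n + 1)) <| by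
    ext y
    have hy := hF' 0 y
    rw [map_zero, zero_add, hFxy] at hy
    simpa [eq_neg_of_add_eq_zero_right (hh.apply n y), hG₁', add_comm] using hy
  have hG₂' y : G₂ (C₂.d (n + 1) y) = F (0, y) - G₁ (h (n + 1) y) := LinearMap.congr_fun hG₂ y
  refine ⟨G₁.coprod G₂, LinearMap.ext fun ⟨x, y⟩ => ?_⟩
  simp [hG₁', hG₂', hFxy x y]

variable (h) in
def twistedSum (hh : IsTwisting C₁ C₂ h) : FgTotallyAcyclicComplex A where
  P n := ModuleCat.of A (C₁.P n × C₂.P n)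
  d := twistedD h
  finite n := inferInstanceAs (Module.Finite A (C₁.P n × C₂.P n))
  projective n := inferInstanceAs (Module.Projective A (C₁.P n × C₂.P n))
  range_eq_ker := range_twistedD hh
  exists_lift := exists_lift_twistedD hh
  exists_extend := exists_extend_twistedD hh

end TwistedSum

section Twistings

variable {C₁ C₂ : FgTotallyAcyclicComplex A}

theorem exists_add_comp_d_eq_zero {n : ℤ} {b : C₂.P (n + 1) →ₗ[A] C₁.P (n + 1 + 1)}
    (hb : C₁.d (n + 1 + 1) ∘ₗ b ∘ₗ C₂.d n = 0) :
    ∃ c : C₂.P (n + 1 + 1) →ₗ[A] C₁.P (n + 1 + 1 + 1),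
      C₁.d (n + 1 + 1) ∘ₗ b + c ∘ₗ C₂.d (n + 1) = 0 := by
  obtain ⟨c, hc⟩ := C₂.exists_extend (C₁.P (n + 1 + 1 + 1)) n (-(C₁.d (n + 1 + 1) ∘ₗ b))
    (by rw [LinearMap.neg_comp, LinearMap.comp_assoc, hb, neg_zero])
  exact ⟨c, by rw [hc, add_neg_cancel]⟩

theorem exists_d_comp_add_eq_zero {n : ℤ} {b : C₂.P (n + 1) →ₗ[A] C₁.P (n + 1 + 1)}
    (hb : C₁.d (n + 1 + 1) ∘ₗ b ∘ₗ C₂.d n = 0) :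
    ∃ a : C₂.P n →ₗ[A] C₁.P (n + 1), C₁.d (n + 1) ∘ₗ a + b ∘ₗ C₂.d n = 0 := by
  obtain ⟨a, ha⟩ := C₁.exists_lift (C₂.P n) (n + 1) (-(b ∘ₗ C₂.d n))
    (by rw [LinearMap.comp_neg, hb, neg_zero])
  exact ⟨a, by rw [ha, neg_add_cancel]⟩

theorem exists_isTwisting {γ : C₂.P (-1) →ₗ[A] C₁.P 0}
    (hγ : C₁.d 0 ∘ₗ γ ∘ₗ C₂.d (-2) = 0) :
    ∃ h : ∀ n, C₂.P n →ₗ[A] C₁.P (n + 1), IsTwisting C₁ C₂ h ∧ h (-1) = γ := by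
  obtain ⟨h₀, hγh₀⟩ := exists_add_comp_d_eq_zero (n := -2) hγ
  obtain ⟨h, hh, hγ', -⟩ := Int.exists_forall_rel_succ
    (T := fun n => C₂.P n →ₗ[A] C₁.P (n + 1))
    (fun n a b => C₁.d (n + 1) ∘ₗ a + b ∘ₗ C₂.d n = 0)
    (fun n a b hab => exists_add_comp_d_eq_zero <| by
      rw [eq_neg_of_add_eq_zero_right hab, LinearMap.comp_neg,
        ← LinearMap.comp_assoc, d_comp_d, LinearMap.zero_comp, neg_zero])
    (fun n b c hbc => exists_d_comp_add_eq_zero <| by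
      rw [← LinearMap.comp_assoc, eq_neg_of_add_eq_zero_left hbc, LinearMap.neg_comp,
        LinearMap.comp_assoc, d_comp_d, LinearMap.comp_zero, neg_zero])
    γ h₀ hγh₀
  exact ⟨h, hh, hγ'⟩

end Twistings

section Extension

variable {C₁ C₂ : FgTotallyAcyclicComplex A}
  {M' M M'' : Type u} [AddCommGroup M'] [Module A M'] [AddCommGroup M] [Module A M]
  [AddCommGroup M''] [Module A M''] {f : M' →ₗ[A] M} {g : M →ₗ[A] M''}
  {h : ∀ n, C₂.P n →ₗ[A] C₁.P (n + 1)}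

theorem exists_extension_cocycle {k : ℤ} (e₂ : M'' ≃ₗ[A] LinearMap.ker (C₂.d (k + 1 + 1)))
    (hf : Function.Injective f) (hfg : Function.Exact f g) (hg : Function.Surjective g) :
    ∃ (t : C₂.P (k + 1) →ₗ[A] M) (c : C₂.P k →ₗ[A] M'),
      g ∘ₗ t = e₂.symm.toLinearMap ∘ₗ C₂.toCycles (k + 1) ∧ f ∘ₗ c = t ∘ₗ C₂.d k := by
  obtain ⟨t, ht⟩ := Module.projective_lifting_property g
    (e₂.symm.toLinearMap ∘ₗ C₂.toCycles (k + 1)) hg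
  have hrange : LinearMap.range (t ∘ₗ C₂.d k) ≤ LinearMap.range f := by
    rintro _ ⟨u, rfl⟩
    refine (hfg _).mp ?_
    have hu : C₂.toCycles (k + 1) (C₂.d k u) = 0 := Subtype.ext (C₂.d_d k u)
    simpa [hu] using LinearMap.congr_fun ht (C₂.d k u)
  obtain ⟨c, hc⟩ := LinearMap.exists_comp_eq_of_injective_of_range_le hf hrange
  exact ⟨t, c, ht, hc⟩

theorem exists_isTwisting_of_extension_cocycle (e₁ : M' ≃ₗ[A] LinearMap.ker (C₁.d 0))
    (hf : Function.Injective f) {t : C₂.P (-1) →ₗ[A] M} {c : C₂.P (-2) →ₗ[A] M'}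
    (hc : f ∘ₗ c = t ∘ₗ C₂.d (-2)) :
    ∃ h : ∀ n, C₂.P n →ₗ[A] C₁.P (n + 1), IsTwisting C₁ C₂ h ∧
      h (-1) ∘ₗ C₂.d (-2) = (LinearMap.ker (C₁.d 0)).subtype ∘ₗ e₁.toLinearMap ∘ₗ c := by
  have hcd : c ∘ₗ C₂.d (-3) = 0 := by
    refine LinearMap.ext fun u => hf ?_
    have hu : C₂.d (-2) (C₂.d (-3) u) = 0 := C₂.d_d (-3) u
    simpa [hu] using LinearMap.congr_fun hc (C₂.d (-3) u)
  obtain ⟨γ, hγ⟩ : ∃ γ : C₂.P (-1) →ₗ[A] C₁.P 0,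
      γ ∘ₗ C₂.d (-2) = (LinearMap.ker (C₁.d 0)).subtype ∘ₗ e₁.toLinearMap ∘ₗ c :=
    C₂.exists_extend (C₁.P 0) (-3)
    ((LinearMap.ker (C₁.d 0)).subtype ∘ₗ e₁.toLinearMap ∘ₗ c : C₂.P (-3 + 1) →ₗ[A] C₁.P 0)
    (by rw [LinearMap.comp_assoc, LinearMap.comp_assoc, hcd, LinearMap.comp_zero,
      LinearMap.comp_zero])
  obtain ⟨h, hh, rfl⟩ := exists_isTwisting (γ := γ) <| by
    rw [hγ, ← LinearMap.comp_assoc, LinearMap.comp_ker_subtype, LinearMap.zero_comp]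
  exact ⟨h, hh, hγ⟩

theorem exists_map_to_twistedSum {k : ℤ} (e₁ : M' ≃ₗ[A] LinearMap.ker (C₁.d (k + 1 + 1)))
    (e₂ : M'' ≃ₗ[A] LinearMap.ker (C₂.d (k + 1 + 1))) (hf : Function.Injective f)
    (hfg : Function.Exact f g) (hh : IsTwisting C₁ C₂ h) {t : C₂.P (k + 1) →ₗ[A] M}
    {c : C₂.P k →ₗ[A] M'} (ht : g ∘ₗ t = e₂.symm.toLinearMap ∘ₗ C₂.toCycles (k + 1))
    (hc : f ∘ₗ c = t ∘ₗ C₂.d k) (hhc : h (k + 1) ∘ₗ C₂.d k =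
      (LinearMap.ker (C₁.d (k + 1 + 1))).subtype ∘ₗ e₁.toLinearMap ∘ₗ c) :
    ∃ Θ : M →ₗ[A] C₁.P (k + 1 + 1) × C₂.P (k + 1 + 1),
      (∀ m', Θ (f m') = ((e₁ m' : C₁.P (k + 1 + 1)), 0)) ∧ (∀ m, (Θ m).2 = e₂ (g m)) ∧
      ∀ m, twistedD h (k + 1 + 1) (Θ m) = 0 := by
  have ht' w : g (t w) = e₂.symm (C₂.toCycles (k + 1) w) := LinearMap.congr_fun ht w
  have hU : Function.Surjective (f.coprod t) := by
    intro m
    obtain ⟨w, hw⟩ := e₂.symm.surjective.comp (C₂.toCycles_surjective (k + 1)) (g m)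
    obtain ⟨m', hm'⟩ := (hfg (m - t w)).mp (by simp_all)
    exact ⟨(m', w), by simp [hm']⟩
  let V : M' × C₂.P (k + 1) →ₗ[A] C₁.P (k + 1 + 1) × C₂.P (k + 1 + 1) :=
    (LinearMap.inl A _ _ ∘ₗ (LinearMap.ker _).subtype ∘ₗ e₁.toLinearMap).coprod
      (twistedD h (k + 1) ∘ₗ LinearMap.inr A _ _)
  have hV m' w : V (m', w) = ((e₁ m' : C₁.P (k + 1 + 1)), 0) + twistedD h (k + 1) (0, w) := by
    simp [V]
  -- The kernel of `f.coprod t` consists of the pairs `(-c u, d u)`, which `V` kills by `hhc`.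
  have hUV : LinearMap.ker (f.coprod t) ≤ LinearMap.ker V := by
    rintro ⟨m', w⟩ hmw
    replace hmw : f m' + t w = 0 := hmw
    have hw : C₂.d (k + 1) w = 0 := by
      have hgw : g (t w) = 0 := by
        rw [eq_neg_of_add_eq_zero_right hmw, map_neg, hfg.apply_apply_eq_zero, neg_zero]
      have hw : C₂.toCycles (k + 1) w = 0 := by simpa [ht'] using hgw
      exact congrArg Subtype.val hw
    obtain ⟨u, rfl⟩ := C₂.exists_d_eq hw
    have hm' : m' = -c u := hf <| by
      rw [map_neg, eq_neg_of_add_eq_zero_left hmw]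
      exact congr(-$(LinearMap.congr_fun hc u)).symm
    have hhu : h (k + 1) (C₂.d k u) = e₁ (c u) := LinearMap.congr_fun hhc u
    simp [hV, hm', hhu, d_d]
  obtain ⟨Θ, hΘ⟩ := LinearMap.exists_comp_eq_of_surjective_of_ker_le hU hUV
  have hΘ m' w : Θ (f m' + t w) = ((e₁ m' : C₁.P (k + 1 + 1)), 0) + twistedD h (k + 1) (0, w) :=
    (LinearMap.congr_fun hΘ (m', w)).trans (hV m' w)
  refine ⟨Θ, fun m' => by simpa using hΘ m' 0, fun m => ?_, fun m => ?_⟩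
  · obtain ⟨⟨m', w⟩, rfl⟩ := hU m
    simp [hΘ, ht', hfg.apply_apply_eq_zero]
  · obtain ⟨⟨m', w⟩, rfl⟩ := hU m
    simp [hΘ, hh.apply, d_d]

theorem nonempty_linearEquiv_ker_twistedD {n : ℤ} (e₁ : M' ≃ₗ[A] LinearMap.ker (C₁.d n))
    (e₂ : M'' ≃ₗ[A] LinearMap.ker (C₂.d n)) (hfg : Function.Exact f g)
    (hg : Function.Surjective g) (Θ : M →ₗ[A] C₁.P n × C₂.P n)
    (hΘf : ∀ m', Θ (f m') = ((e₁ m' : C₁.P n), 0)) (hΘg : ∀ m, (Θ m).2 = e₂ (g m))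
    (hΘ : ∀ m, twistedD h n (Θ m) = 0) :
    Nonempty (M ≃ₗ[A] LinearMap.ker (twistedD h n)) := by
  refine ⟨LinearEquiv.ofBijective (Θ.codRestrict _ hΘ) ⟨?_, ?_⟩⟩
  · refine (injective_iff_map_eq_zero _).mpr fun m hm => ?_
    replace hm : Θ m = 0 := congrArg Subtype.val hm
    have hgm : g m = 0 := by simpa [hm] using (hΘg m).symm
    obtain ⟨m', rfl⟩ := (hfg m).mp hgm
    have hm' : e₁ m' = 0 := by simpa [hΘf] using hm
    rw [e₁.map_eq_zero_iff.mp hm', map_zero]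
  · rintro ⟨⟨x, y⟩, hxy⟩
    replace hxy : C₁.d n x + h n y = 0 ∧ C₂.d n y = 0 := Prod.mk_eq_zero.mp hxy
    obtain ⟨m, hm⟩ := hg (e₂.symm ⟨y, hxy.2⟩)
    have hmy : (Θ m).2 = y := by simp [hΘg, hm]
    have hx : C₁.d n (x - (Θ m).1) = 0 := by
      have hΘm : C₁.d n (Θ m).1 + h n (Θ m).2 = 0 := (Prod.mk_eq_zero.mp (hΘ m)).1
      rw [map_sub, eq_neg_of_add_eq_zero_left hxy.1, eq_neg_of_add_eq_zero_left hΘm, hmy, sub_self]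
    refine ⟨m + f (e₁.symm ⟨_, hx⟩), Subtype.ext ?_⟩
    change Θ (m + f (e₁.symm ⟨_, hx⟩)) = (x, y)
    simp [hΘf, Prod.ext_iff, hmy]

end Extension

end FgTotallyAcyclicComplex

theorem isFgGorensteinProjective_of_extension_general
    (A : Type u) [Ring A]
    (M' M M'' : Type u)
    [AddCommGroup M'] [Module A M']
    [AddCommGroup M] [Module A M]
    [AddCommGroup M''] [Module A M'']
    (f : M' →ₗ[A] M) (g : M →ₗ[A] M'')
    (hf : Function.Injective f) (hg : Function.Surjective g)
    (hfg : LinearMap.range f = LinearMap.ker g)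
    (h' : IsFgGorensteinProjective A M') (h'' : IsFgGorensteinProjective A M'') :
    IsFgGorensteinProjective A M := by
  obtain ⟨C₁, ⟨e₁⟩⟩ := isFgGorensteinProjective_iff.mp h'
  obtain ⟨C₂, ⟨e₂⟩⟩ := isFgGorensteinProjective_iff.mp h''
  have hexact : Function.Exact f g := LinearMap.exact_iff.mpr hfg.symm
  obtain ⟨t, c, ht, hc⟩ :=
    FgTotallyAcyclicComplex.exists_extension_cocycle (k := -2) e₂ hf hexact hg
  obtain ⟨h, hh, hhc⟩ :=
    FgTotallyAcyclicComplex.exists_isTwisting_of_extension_cocycle e₁ hf hc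
  -- `by exact` delays checking `hhc` until `e₁` has been accepted at `ker (C₁.d (-2 + 1 + 1))`.
  obtain ⟨Θ, hΘf, hΘg, hΘ⟩ := FgTotallyAcyclicComplex.exists_map_to_twistedSum (k := -2)
    e₁ e₂ hf hexact hh ht hc (by exact hhc)
  exact isFgGorensteinProjective_iff.mpr ⟨.twistedSum h hh,
    FgTotallyAcyclicComplex.nonempty_linearEquiv_ker_twistedD e₁ e₂ hexact hg Θ hΘf hΘg hΘ⟩

/-- The class of finitely generated Gorenstein-projective modules over an artin algebra
is closed under extensions. -/
theorem isFgGorensteinProjective_of_extension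
    (R : Type u) [CommRing R] [IsArtinianRing R]
    (A : Type u) [Ring A] [Algebra R A] [Module.Finite R A]
    (M' M M'' : Type u)
    [AddCommGroup M'] [Module A M'] [Module.Finite A M']
    [AddCommGroup M] [Module A M] [Module.Finite A M]
    [AddCommGroup M''] [Module A M''] [Module.Finite A M'']
    (f : M' →ₗ[A] M) (g : M →ₗ[A] M'')
    (hf : Function.Injective f) (hg : Function.Surjective g)
    (hfg : LinearMap.range f = LinearMap.ker g)
    (h' : IsFgGorensteinProjective A M') (h'' : IsFgGorensteinProjective A M'') :
    IsFgGorensteinProjective A M :=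
  isFgGorensteinProjective_of_extension_general A M' M M'' f g hf hg hfg h' h''
end

section
/- Let A be an artin algebra. The class of finitely generated Gorenstein-projective left A-modules is closed under kernels of epimorphisms: if 0 → M' → M → M'' → 0 is a short exact sequence of finitely generated A-modules with M and M'' Gorenstein-projective, then M' is Gorenstein-projective. -/
open CategoryTheory DirectSum

universe u

/-!
Take totally acyclic complexes `C`, `D` with `Z⁰C ≅ M` and `Z⁰D ≅ M''`. Projectivity of the
terms of `C` and `Hom(-, proj)`-exactness of `C` let `g` extend to a chain map `φ : C → D`. The
mapping cone of `φ` is again totally acyclic, and its cocycles in degree `-1` are the pullback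
of `Z⁰C → Z⁰D` along `D⁻¹ → Z⁰D`, which is `M' × D⁻¹` since `D⁻¹` is projective. Dividing the
cone by a contractible copy of `D⁻¹ = D⁻¹` in degrees `-2, -1` removes the summand `D⁻¹`, and a
shift moves `M'` to degree `0`.
-/

open LinearMap (ker range)

theorem Module.Projective.quotient_of_eq_range {R E Q : Type*} [Ring R] [AddCommGroup E]
    [Module R E] [Module.Projective R E] [AddCommGroup Q] [Module R Q] {p : Submodule R E}
    (k : Q →ₗ[R] E) (ρ : E →ₗ[R] Q) (hρ : ∀ q, ρ (k q) = q) (hp : p = range k) :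
    Module.Projective R (E ⧸ p) := by
  subst hp
  have hu : range k ≤ ker (LinearMap.id - k ∘ₗ ρ) := by
    rintro _ ⟨q, rfl⟩
    simp [hρ]
  refine .of_split ((range k).liftQ _ hu) (range k).mkQ
    (Submodule.linearMap_qext _ (LinearMap.ext fun x => ?_))
  simp

theorem Submodule.range_mapQ_eq_ker_mapQ {R M N P : Type*} [Ring R] [AddCommGroup M]
    [Module R M] [AddCommGroup N] [Module R N] [AddCommGroup P] [Module R P]
    {f : M →ₗ[R] N} {g : N →ₗ[R] P} (p : Submodule R M) (q : Submodule R N)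
    (r : Submodule R P) (hf : p ≤ q.comap f) (hg : q ≤ r.comap g) (hfg : range f = ker g)
    (hr : r ⊓ range g ≤ q.map g) :
    range (p.mapQ q f hf) = ker (q.mapQ r g hg) := by
  apply le_antisymm
  · rintro _ ⟨x, rfl⟩
    obtain ⟨x, rfl⟩ := p.mkQ_surjective x
    have hx : g (f x) = 0 := hfg.le ⟨x, rfl⟩
    simp [hx]
  · intro y hy
    obtain ⟨y, rfl⟩ := q.mkQ_surjective y
    have hgy : g y ∈ r := by simpa [Submodule.Quotient.mk_eq_zero] using hy
    obtain ⟨s, hs, hgs⟩ := hr ⟨hgy, y, rfl⟩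
    obtain ⟨x, hx⟩ : y - s ∈ range f := by simp [hfg, hgs]
    refine ⟨p.mkQ x, ?_⟩
    simp [hx, (Submodule.Quotient.mk_eq_zero q).mpr hs]

/-- `ker (g.coprod (-p))` is the pullback of `g` and `p`; a lift of `p` through `g` splits it. -/
theorem Function.Exact.nonempty_prod_equiv_ker_coprod {R M' M M'' P : Type*} [Ring R]
    [AddCommGroup M'] [Module R M'] [AddCommGroup M] [Module R M] [AddCommGroup M'']
    [Module R M''] [AddCommGroup P] [Module R P] [Module.Projective R P]
    {f : M' →ₗ[R] M} {g : M →ₗ[R] M''} (hfg : Function.Exact f g)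
    (hf : Function.Injective f) {p : P →ₗ[R] M''} (hp : range p ≤ range g) :
    Nonempty ((M' × P) ≃ₗ[R] ker (g.coprod (-p))) := by
  obtain ⟨s, hs⟩ := Module.projective_lifting_property g.rangeRestrict
    (p.codRestrict _ fun q => hp ⟨q, rfl⟩) g.surjective_rangeRestrict
  replace hs : ∀ q, g (s q) = p q := fun q => congr_arg Subtype.val (LinearMap.congr_fun hs q)
  let α : M' × P →ₗ[R] M × P := (f.coprod s).prod (LinearMap.snd R M' P)
  have hα : ∀ w, α w ∈ ker (g.coprod (-p)) := fun ⟨m', q⟩ => by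
    simp [α, hfg.apply_apply_eq_zero, hs]
  refine ⟨LinearEquiv.ofBijective (α.codRestrict _ hα) ⟨?_, ?_⟩⟩
  · rw [injective_iff_map_eq_zero]
    rintro ⟨m', q⟩ h
    simp only [Subtype.ext_iff, LinearMap.codRestrict_apply, Prod.ext_iff] at h
    obtain rfl : q = 0 := h.2
    exact Prod.ext ((map_eq_zero_iff f hf).mp (by simpa [α] using h.1)) rfl
  · rintro ⟨⟨m, q⟩, h⟩
    have h' : g (m - s q) = 0 := by
      rw [map_sub]
      simpa [hs, sub_eq_add_neg] using h
    obtain ⟨m', hm'⟩ := (hfg _).mp h'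
    exact ⟨(m', q), Subtype.ext <| by simp [α, hm']⟩

/-- The complexes of `IsFgGorensteinProjective`, with linear maps as differentials. Exactness of
`Hom_A(Q, -)` is not recorded: it follows from exactness and the projectivity of `Q`. -/
structure TotallyAcyclicComplex (A : Type u) [Ring A] where
  X : ℤ → ModuleCat.{u} A
  d : ∀ n : ℤ, X n →ₗ[A] X (n + 1)
  finite : ∀ n, Module.Finite A (X n)
  projective : ∀ n, Module.Projective A (X n)
  range_d : ∀ n, range (d n) = ker (d (n + 1))
  exists_comp_d : ∀ (Q : Type u) [AddCommGroup Q] [Module A Q] [Module.Finite A Q]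
    [Module.Projective A Q] (n : ℤ) (f : X (n + 1) →ₗ[A] Q),
    f ∘ₗ d n = 0 → ∃ g : X (n + 1 + 1) →ₗ[A] Q, g ∘ₗ d (n + 1) = f

attribute [instance] TotallyAcyclicComplex.finite TotallyAcyclicComplex.projective

namespace TotallyAcyclicComplex

section Basic

variable {A : Type u} [Ring A] (C : TotallyAcyclicComplex A)

@[simp]
theorem d_d (n : ℤ) (x : C.X n) : C.d (n + 1) (C.d n x) = 0 :=
  (C.range_d n).le ⟨x, rfl⟩

theorem exists_lift {V : Type u} [AddCommGroup V] [Module A V] [Module.Projective A V]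
    (n : ℤ) (f : V →ₗ[A] C.X (n + 1)) (hf : ∀ v, C.d (n + 1) (f v) = 0) :
    ∃ g : V →ₗ[A] C.X n, ∀ v, C.d n (g v) = f v := by
  have hmem : ∀ v, f v ∈ range (C.d n) := fun v => (C.range_d n).ge (hf v)
  obtain ⟨g, hg⟩ := Module.projective_lifting_property (C.d n).rangeRestrict
    (f.codRestrict _ hmem) (C.d n).surjective_rangeRestrict
  exact ⟨g, fun v => congr_arg Subtype.val (LinearMap.congr_fun hg v)⟩

theorem exists_extend {Q : Type u} [AddCommGroup Q] [Module A Q] [Module.Finite A Q]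
    [Module.Projective A Q] (n : ℤ) (f : C.X (n + 1) →ₗ[A] Q) (hf : ∀ x, f (C.d n x) = 0) :
    ∃ g : C.X (n + 1 + 1) →ₗ[A] Q, ∀ x, g (C.d (n + 1) x) = f x := by
  obtain ⟨g, hg⟩ := C.exists_comp_d Q n f (LinearMap.ext hf)
  exact ⟨g, LinearMap.congr_fun hg⟩

theorem exists_extend_of_ker {Q : Type u} [AddCommGroup Q] [Module A Q] [Module.Finite A Q]
    [Module.Projective A Q] (n : ℤ) (h : ker (C.d n) →ₗ[A] Q) :
    ∃ g : C.X n →ₗ[A] Q, ∀ z : ker (C.d n), g z = h z := by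
  obtain ⟨m, rfl⟩ : ∃ m, m + 1 + 1 = n := ⟨n - 2, by ring⟩
  let δ := (C.d (m + 1)).codRestrict (ker (C.d (m + 1 + 1))) (C.d_d _)
  have hδ : ∀ x, δ (C.d m x) = 0 := fun x => Subtype.ext (C.d_d m x)
  obtain ⟨g, hg⟩ := C.exists_extend m (h ∘ₗ δ) fun x => by simp [hδ]
  refine ⟨g, fun ⟨z, hz⟩ => ?_⟩
  obtain ⟨x, rfl⟩ := (C.range_d (m + 1)).ge hz
  exact hg x

theorem isFgGorensteinProjective_of_equiv_ker_zero {M : Type u} [AddCommGroup M] [Module A M]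
    (e : M ≃ₗ[A] ker (C.d 0)) : IsFgGorensteinProjective A M := by
  refine ⟨C.X, fun n => ModuleCat.ofHom (C.d n), C.finite, C.projective, C.range_d,
    fun Q _ _ => ⟨fun n f hf => ?_, fun n f hf => ?_⟩, ⟨e⟩⟩
  · obtain ⟨g, hg⟩ := C.exists_lift (V := Q) n f.hom fun x => congr($hf x)
    exact ⟨ModuleCat.ofHom g, ModuleCat.hom_ext (LinearMap.ext hg)⟩
  · obtain ⟨g, hg⟩ := C.exists_extend n f.hom fun x => congr($hf x)
    exact ⟨ModuleCat.ofHom g, ModuleCat.hom_ext (LinearMap.ext hg)⟩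

/-- Needed because `C.X (n + k + 1)` and `C.X (n + 1 + k)` are not definitionally equal. -/
def castX {m n : ℤ} (h : m = n) : C.X m →ₗ[A] C.X n :=
  h ▸ LinearMap.id

theorem range_castX_comp_d {a b c : ℤ} (hab : a + 1 = b) (hbc : b + 1 = c) :
    range (C.castX hab ∘ₗ C.d a) = ker (C.castX hbc ∘ₗ C.d b) := by
  subst hab hbc
  simpa [castX] using C.range_d a

theorem exists_comp_castX_comp_d (Q : Type u) [AddCommGroup Q] [Module A Q] [Module.Finite A Q]
    [Module.Projective A Q] {a b c : ℤ} (hab : a + 1 = b) (hbc : b + 1 = c)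
    (f : C.X b →ₗ[A] Q) (hf : f ∘ₗ C.castX hab ∘ₗ C.d a = 0) :
    ∃ g : C.X c →ₗ[A] Q, g ∘ₗ C.castX hbc ∘ₗ C.d b = f := by
  subst hab hbc
  simpa [castX] using C.exists_comp_d Q a f (by simpa [castX] using hf)

theorem nonempty_ker_castX_comp_d_equiv {a b c : ℤ} (hab : a = b) (hac : a + 1 = c) :
    Nonempty (ker (C.castX hac ∘ₗ C.d a) ≃ₗ[A] ker (C.d b)) := by
  subst hab hac
  exact ⟨LinearEquiv.ofEq _ _ (by simp [castX])⟩

def shift (k : ℤ) : TotallyAcyclicComplex A where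
  X n := C.X (n + k)
  d n := C.castX (add_right_comm n k 1) ∘ₗ C.d (n + k)
  finite n := C.finite (n + k)
  projective n := C.projective (n + k)
  range_d _ := C.range_castX_comp_d _ _
  exists_comp_d Q _ _ _ _ _ f hf := C.exists_comp_castX_comp_d Q _ _ f hf

theorem isFgGorensteinProjective_of_equiv_ker {M : Type u} [AddCommGroup M] [Module A M]
    (k : ℤ) (e : M ≃ₗ[A] ker (C.d k)) : IsFgGorensteinProjective A M :=
  have ⟨e₀⟩ := C.nonempty_ker_castX_comp_d_equiv (zero_add k) (add_right_comm 0 k 1)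
  (C.shift k).isFgGorensteinProjective_of_equiv_ker_zero (e.trans e₀.symm)

theorem _root_.IsFgGorensteinProjective.exists_totallyAcyclicComplex {M : Type u}
    [AddCommGroup M] [Module A M] (h : IsFgGorensteinProjective A M) :
    ∃ C : TotallyAcyclicComplex A, Nonempty (M ≃ₗ[A] ker (C.d 0)) := by
  obtain ⟨P, d, finite, projective, range_d, hom_exact, e⟩ := h
  refine ⟨⟨P, fun n => (d n).hom, finite, projective, range_d, fun Q _ _ _ _ n f hf => ?_⟩, e⟩
  obtain ⟨g, hg⟩ := (hom_exact (ModuleCat.of A Q) ‹_› ‹_›).2 n (ModuleCat.ofHom f)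
    (ModuleCat.hom_ext hf)
  exact ⟨g.hom, congr_arg ModuleCat.Hom.hom hg⟩

end Basic

variable {A : Type u} [Ring A]

section ChainMap

variable {C D : TotallyAcyclicComplex A}

/-- A chain map `C → D` is built from such squares, extended to the right by `Hom(-, proj)`-
exactness of `C` and to the left by projectivity of `C` and exactness of `D`. -/
structure ChainSquare (C D : TotallyAcyclicComplex A) (n : ℤ) where
  left : C.X n →ₗ[A] D.X n
  right : C.X (n + 1) →ₗ[A] D.X (n + 1)
  comm : ∀ x, right (C.d n x) = D.d n (left x)

namespace ChainSquare

noncomputable def succ {n : ℤ} (s : ChainSquare C D n) : ChainSquare C D (n + 1) :=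
  have h := C.exists_extend n (D.d (n + 1) ∘ₗ s.right) fun x => by simp [s.comm]
  { left := s.right, right := h.choose, comm := h.choose_spec }

noncomputable def pred {n : ℤ} (s : ChainSquare C D (n + 1)) : ChainSquare C D n :=
  have h := D.exists_lift n (s.left ∘ₗ C.d n) fun x => by simp [← s.comm]
  { left := h.choose, right := s.left, comm := fun x => (h.choose_spec x).symm }

noncomputable def succIter (s : ChainSquare C D 0) : ∀ k : ℕ, ChainSquare C D k
  | 0 => s
  | k + 1 => (s.succIter k).succ

noncomputable def predIter (s : ChainSquare C D 0) : ∀ k : ℕ, ChainSquare C D (Int.negSucc k)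
  | 0 => pred (n := -1) s
  | k + 1 => pred (n := Int.negSucc (k + 1)) (s.predIter k)

noncomputable def toChainMap (s : ChainSquare C D 0) : ∀ n : ℤ, C.X n →ₗ[A] D.X n
  | Int.ofNat k => (s.succIter k).left
  | Int.negSucc k => (s.predIter k).left

theorem toChainMap_comm (s : ChainSquare C D 0) :
    ∀ n x, s.toChainMap (n + 1) (C.d n x) = D.d n (s.toChainMap n x)
  | Int.ofNat k, x => (s.succIter k).comm x
  | Int.negSucc 0, x => (s.predIter 0).comm x
  | Int.negSucc (k + 1), x => (s.predIter (k + 1)).comm x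

end ChainSquare

theorem exists_chainMap (ψ : ker (C.d 0) →ₗ[A] ker (D.d 0)) :
    ∃ φ : ∀ n, C.X n →ₗ[A] D.X n, (∀ n x, φ (n + 1) (C.d n x) = D.d n (φ n x)) ∧
      φ 0 ∘ₗ (ker (C.d 0)).subtype = (ker (D.d 0)).subtype ∘ₗ ψ := by
  obtain ⟨φ₀, hφ₀⟩ := C.exists_extend_of_ker 0 ((ker (D.d 0)).subtype ∘ₗ ψ)
  have hd : ∀ x, D.d 0 (φ₀ (C.d (-1) x)) = 0 := fun x =>
    (hφ₀ ⟨C.d (-1) x, C.d_d _ x⟩).symm ▸ (ψ _).2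
  obtain ⟨φ₁, hφ₁⟩ := C.exists_extend (-1) (D.d 0 ∘ₗ φ₀ : C.X 0 →ₗ[A] D.X 1) hd
  let s : ChainSquare C D 0 := ⟨φ₀, φ₁, hφ₁⟩
  exact ⟨s.toChainMap, s.toChainMap_comm, LinearMap.ext hφ₀⟩

end ChainMap

section Cone

variable {C D : TotallyAcyclicComplex A} (φ : ∀ n, C.X n →ₗ[A] D.X n)
  (hφ : ∀ n x, φ (n + 1) (C.d n x) = D.d n (φ n x))

def coneD (n : ℤ) : C.X (n + 1) × D.X n →ₗ[A] C.X (n + 1 + 1) × D.X (n + 1) :=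
  (C.d (n + 1) ∘ₗ LinearMap.fst A _ _).prod
    (φ (n + 1) ∘ₗ LinearMap.fst A _ _ - D.d n ∘ₗ LinearMap.snd A _ _)

@[simp]
theorem coneD_apply (n : ℤ) (x : C.X (n + 1)) (y : D.X n) :
    coneD φ n (x, y) = (C.d (n + 1) x, φ (n + 1) x - D.d n y) :=
  rfl

include hφ in
theorem range_coneD (n : ℤ) : range (coneD φ n) = ker (coneD φ (n + 1)) := by
  apply le_antisymm
  · rintro _ ⟨⟨x, y⟩, rfl⟩
    simp [hφ]
  · rintro ⟨x, y⟩ hxy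
    simp only [LinearMap.mem_ker, coneD_apply, Prod.mk_eq_zero, sub_eq_zero] at hxy
    obtain ⟨u, rfl⟩ := (C.range_d (n + 1)).ge hxy.1
    have hv : φ (n + 1) u - y ∈ ker (D.d (n + 1)) := by
      simp [LinearMap.mem_ker, ← hφ, hxy.2]
    obtain ⟨v, hv⟩ := (D.range_d n).ge hv
    exact ⟨(u, v), by simp [hv]⟩

include hφ in
theorem exists_comp_coneD (Q : Type u) [AddCommGroup Q] [Module A Q] [Module.Finite A Q]
    [Module.Projective A Q] (n : ℤ) (f : C.X (n + 1 + 1) × D.X (n + 1) →ₗ[A] Q)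
    (hf : f ∘ₗ coneD φ n = 0) : ∃ g, g ∘ₗ coneD φ (n + 1) = f := by
  have hf' (x : C.X (n + 1)) (y : D.X n) : f (C.d (n + 1) x, φ (n + 1) x - D.d n y) = 0 :=
    LinearMap.congr_fun hf (x, y)
  obtain ⟨b, hb⟩ := D.exists_extend n (f ∘ₗ LinearMap.inr A _ _) fun y => by
    simpa using hf' 0 (-y)
  obtain ⟨a, ha⟩ := C.exists_extend (n + 1)
    (f ∘ₗ LinearMap.inl A _ _ + b ∘ₗ φ (n + 1 + 1)) fun x => by
      simpa [hφ, hb, ← map_add] using hf' x 0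
  refine ⟨a ∘ₗ LinearMap.fst A _ _ - b ∘ₗ LinearMap.snd A _ _, LinearMap.prod_ext ?_ ?_⟩
  · ext x
    simp [ha]
  · ext y
    simp [hb]

def cone : TotallyAcyclicComplex A where
  X n := ModuleCat.of A (C.X (n + 1) × D.X n)
  d := coneD φ
  finite n := inferInstanceAs (Module.Finite A (C.X (n + 1) × D.X n))
  projective n := inferInstanceAs (Module.Projective A (C.X (n + 1) × D.X n))
  range_d := range_coneD φ hφ
  exists_comp_d := exists_comp_coneD φ hφ

theorem nonempty_ker_cone_d_equiv (n : ℤ) :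
    Nonempty (ker ((cone φ hφ).d n) ≃ₗ[A]
      ker ((φ (n + 1) ∘ₗ (ker (C.d (n + 1))).subtype).coprod (-D.d n))) := by
  set K := ker ((φ (n + 1) ∘ₗ (ker (C.d (n + 1))).subtype).coprod (-D.d n))
  have hmem {z : ker (C.d (n + 1))} {y : D.X n} : (z, y) ∈ K ↔ φ (n + 1) z = D.d n y := by
    rw [LinearMap.mem_ker, LinearMap.coprod_apply, LinearMap.neg_apply, add_neg_eq_zero]
    rfl
  let L : K →ₗ[A] (cone φ hφ).X n :=
    (ker (C.d (n + 1))).subtype.prodMap LinearMap.id ∘ₗ K.subtype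
  have hL : ∀ w, L w ∈ ker ((cone φ hφ).d n) := fun ⟨⟨z, y⟩, h⟩ => by
    change coneD φ n ((z : C.X (n + 1)), y) = 0
    rw [coneD_apply, z.2, hmem.mp h, sub_self, Prod.mk_zero_zero]
  refine ⟨(LinearEquiv.ofBijective (L.codRestrict _ hL) ⟨?_, ?_⟩).symm⟩
  · rintro ⟨⟨z, y⟩, _⟩ ⟨⟨z', y'⟩, _⟩ h
    obtain ⟨hz, hy⟩ := Prod.mk.inj (congr_arg Subtype.val h)
    exact Subtype.ext (Prod.ext (Subtype.ext hz) hy)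
  · rintro ⟨⟨x, y⟩, h⟩
    change coneD φ n (x, y) = 0 at h
    rw [coneD_apply, Prod.mk_eq_zero, sub_eq_zero] at h
    exact ⟨⟨(⟨x, h.1⟩, y), hmem.mpr h.2⟩, rfl⟩

end Cone

section Disc

variable (C : TotallyAcyclicComplex A) (c : ℤ) {Q : Type u} [AddCommGroup Q] [Module A Q]
  (k : Q →ₗ[A] C.X (c + 1))

/-- The image of the complex `Q = Q`, placed in degrees `c + 1` and `c + 2`, under `k` and
`d ∘ k`. -/
def disc (n : ℤ) : Submodule A (C.X n) :=
  if h : c + 1 = n then h ▸ range k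
  else if h : c + 1 + 1 = n then h ▸ range (C.d (c + 1) ∘ₗ k)
  else ⊥

theorem disc_self : C.disc c k (c + 1) = range k :=
  dif_pos rfl

theorem disc_succ_self : C.disc c k (c + 1 + 1) = range (C.d (c + 1) ∘ₗ k) := by
  rw [disc, dif_neg (by omega), dif_pos rfl]

theorem disc_of_ne {n : ℤ} (h₁ : c + 1 ≠ n) (h₂ : c + 1 + 1 ≠ n) : C.disc c k n = ⊥ := by
  rw [disc, dif_neg h₁, dif_neg h₂]

theorem disc_le_comap_d (n : ℤ) : C.disc c k n ≤ (C.disc c k (n + 1)).comap (C.d n) := by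
  by_cases h₁ : c + 1 = n
  · subst h₁
    rw [disc_self, disc_succ_self]
    rintro _ ⟨q, rfl⟩
    exact ⟨q, rfl⟩
  by_cases h₂ : c + 1 + 1 = n
  · subst h₂
    rw [disc_succ_self]
    rintro _ ⟨q, rfl⟩
    simp
  · simp [C.disc_of_ne c k h₁ h₂]

variable (σ : C.X (c + 1 + 1) →ₗ[A] Q) (hσ : ∀ q, σ (C.d (c + 1) (k q)) = q)
include hσ

theorem disc_inf_range_d_le (m : ℤ) :
    C.disc c k (m + 1) ⊓ range (C.d m) ≤ (C.disc c k m).map (C.d m) := by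
  rintro y ⟨hy, x, rfl⟩
  by_cases h₁ : c = m
  · subst h₁
    rw [disc_self] at hy
    obtain ⟨q, hq⟩ := hy
    obtain rfl : q = 0 := by simpa [hq] using (hσ q).symm
    simp [← hq]
  by_cases h₂ : c + 1 = m
  · subst h₂
    rw [disc_succ_self] at hy
    obtain ⟨q, hq⟩ := hy
    exact ⟨k q, by rw [disc_self]; exact ⟨q, rfl⟩, hq⟩
  · rw [C.disc_of_ne c k (by omega) (by omega)] at hy
    simp [(Submodule.mem_bot A).mp hy]

theorem projective_quotient_disc (n : ℤ) :
    Module.Projective A (C.X n ⧸ C.disc c k n) := by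
  by_cases h₁ : c + 1 = n
  · subst h₁
    exact .quotient_of_eq_range k (σ ∘ₗ C.d (c + 1)) hσ (C.disc_self c k)
  by_cases h₂ : c + 1 + 1 = n
  · subst h₂
    exact .quotient_of_eq_range (C.d (c + 1) ∘ₗ k) σ hσ (C.disc_succ_self c k)
  · exact .of_equiv (Submodule.quotEquivOfEqBot _ (C.disc_of_ne c k h₁ h₂)).symm

theorem exists_extend_disc_le_ker {P : Type u} [AddCommGroup P] [Module A P]
    [Module.Finite A P] [Module.Projective A P] (n : ℤ) (f : C.X (n + 1) →ₗ[A] P)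
    (hf : ∀ x, f (C.d n x) = 0) (hfk : C.disc c k (n + 1) ≤ ker f) :
    ∃ g : C.X (n + 1 + 1) →ₗ[A] P, C.disc c k (n + 1 + 1) ≤ ker g ∧
      ∀ x, g (C.d (n + 1) x) = f x := by
  obtain ⟨g, hg⟩ := C.exists_extend n f hf
  by_cases h₁ : c = n + 1
  · subst h₁
    refine ⟨g - g ∘ₗ k ∘ₗ σ ∘ₗ C.d (n + 1 + 1), ?_, fun x => by simp [hg]⟩
    rw [disc_self]
    rintro _ ⟨q, rfl⟩
    simp [hσ]
  refine ⟨g, ?_, hg⟩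
  by_cases h₂ : c = n
  · subst h₂
    rw [disc_succ_self]
    rintro _ ⟨q, rfl⟩
    simpa [hg] using hfk (by rw [disc_self]; exact ⟨q, rfl⟩)
  · simp [C.disc_of_ne c k (n := n + 1 + 1) (by omega) (by omega)]

/-- Dividing by `disc` keeps total acyclicity since `disc` is contractible and, by `σ`,
degreewise split. -/
def quotientDisc : TotallyAcyclicComplex A where
  X n := ModuleCat.of A (C.X n ⧸ C.disc c k n)
  d n := (C.disc c k n).mapQ _ (C.d n) (C.disc_le_comap_d c k n)
  finite n := inferInstanceAs (Module.Finite A (C.X n ⧸ C.disc c k n))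
  projective := C.projective_quotient_disc c k σ hσ
  range_d n := Submodule.range_mapQ_eq_ker_mapQ _ _ _ _ _ (C.range_d n)
    (C.disc_inf_range_d_le c k σ hσ (n + 1))
  exists_comp_d P _ _ _ _ n f hf := by
    obtain ⟨g, hgk, hg⟩ := C.exists_extend_disc_le_ker c k σ hσ n (f ∘ₗ (C.disc c k _).mkQ)
      (fun x => by simpa using LinearMap.congr_fun hf ((C.disc c k n).mkQ x))
      (fun x hx => by simp [(Submodule.Quotient.mk_eq_zero _).mpr hx])
    exact ⟨(C.disc c k _).liftQ g hgk,
      Submodule.linearMap_qext _ (LinearMap.ext fun x => by simp [hg])⟩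

end Disc

section SplitOff

variable (C : TotallyAcyclicComplex A) {W Q : Type u} [AddCommGroup W] [Module A W]
  [AddCommGroup Q] [Module A Q]

theorem nonempty_equiv_ker_quotientDisc (c : ℤ) (e : (W × Q) ≃ₗ[A] ker (C.d (c + 1 + 1)))
    (k : Q →ₗ[A] C.X (c + 1)) (hk : ∀ q, C.d (c + 1) (k q) = e (0, q))
    (σ : C.X (c + 1 + 1) →ₗ[A] Q) (hσ : ∀ q, σ (C.d (c + 1) (k q)) = q) :
    Nonempty (W ≃ₗ[A] ker ((C.quotientDisc c k σ hσ).d (c + 1 + 1))) := by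
  let S := C.disc c k (c + 1 + 1)
  have hS : S = range (C.d (c + 1) ∘ₗ k) := C.disc_succ_self c k
  have hnext : C.disc c k (c + 1 + 1 + 1) = ⊥ := C.disc_of_ne c k (by omega) (by omega)
  let β : W →ₗ[A] (C.quotientDisc c k σ hσ).X (c + 1 + 1) :=
    S.mkQ ∘ₗ (ker (C.d (c + 1 + 1))).subtype ∘ₗ e.toLinearMap ∘ₗ LinearMap.inl A W Q
  have hβ : ∀ w, β w ∈ ker ((C.quotientDisc c k σ hσ).d (c + 1 + 1)) := fun w => by
    have hw : C.d (c + 1 + 1) (e (w, 0)) = 0 := (e (w, 0)).2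
    change (C.disc c k _).mapQ _ (C.d (c + 1 + 1)) (C.disc_le_comap_d c k _)
      (Submodule.Quotient.mk (e (w, 0) : C.X (c + 1 + 1))) = 0
    rw [Submodule.mapQ_apply, hw, Submodule.Quotient.mk_zero]
  refine ⟨LinearEquiv.ofBijective (β.codRestrict _ hβ) ⟨?_, ?_⟩⟩
  · rw [injective_iff_map_eq_zero]
    intro w hw
    have hwS : (e (w, 0) : C.X (c + 1 + 1)) ∈ S :=
      (Submodule.Quotient.mk_eq_zero _).mp (congr_arg Subtype.val hw)
    rw [hS] at hwS
    obtain ⟨q, hq⟩ := hwS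
    rw [LinearMap.comp_apply, hk, ← Subtype.ext_iff] at hq
    exact (Prod.mk.inj (e.injective hq)).1.symm
  · rintro ⟨x, hx⟩
    obtain ⟨x, rfl⟩ := S.mkQ_surjective x
    have hdx : C.d (c + 1 + 1) x = 0 := by
      have := (Submodule.Quotient.mk_eq_zero _).mp hx
      rwa [hnext, Submodule.mem_bot] at this
    obtain ⟨⟨w, q⟩, hwq⟩ := e.surjective ⟨x, hdx⟩
    refine ⟨w, Subtype.ext ((Submodule.Quotient.eq _).mpr ?_)⟩
    have hx : x = e (w, 0) + C.d (c + 1) (k q) := by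
      rw [hk, ← Submodule.coe_add, ← map_add, Prod.mk_add_mk, add_zero, zero_add, hwq]
    change (e (w, 0) : C.X (c + 1 + 1)) - x ∈ S
    rw [hS, hx, sub_add_cancel_left]
    exact neg_mem ⟨q, rfl⟩

theorem exists_equiv_ker_of_prod_equiv_ker [Module.Finite A Q] [Module.Projective A Q] (n : ℤ)
    (e : (W × Q) ≃ₗ[A] ker (C.d n)) :
    ∃ C' : TotallyAcyclicComplex A, Nonempty (W ≃ₗ[A] ker (C'.d n)) := by
  obtain ⟨c, rfl⟩ : ∃ c, c + 1 + 1 = n := ⟨n - 2, by ring⟩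
  obtain ⟨σ, hσ⟩ := C.exists_extend_of_ker (c + 1 + 1) (LinearMap.snd A W Q ∘ₗ e.symm.toLinearMap)
  obtain ⟨k, hk⟩ := C.exists_lift (c + 1)
    ((ker (C.d (c + 1 + 1))).subtype ∘ₗ e.toLinearMap ∘ₗ LinearMap.inr A W Q)
    fun q => (e (0, q)).2
  have hσk : ∀ q, σ (C.d (c + 1) (k q)) = q := fun q => by
    simpa [hk] using hσ (e (0, q))
  exact ⟨_, C.nonempty_equiv_ker_quotientDisc c e k hk σ hσk⟩

end SplitOff

end TotallyAcyclicComplex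

theorem isFgGorensteinProjective_of_kernel_of_epi_general
    (A : Type u) [Ring A]
    (M' M M'' : Type u)
    [AddCommGroup M'] [Module A M']
    [AddCommGroup M] [Module A M]
    [AddCommGroup M''] [Module A M'']
    (f : M' →ₗ[A] M) (g : M →ₗ[A] M'')
    (hf : Function.Injective f) (hg : Function.Surjective g)
    (hfg : LinearMap.range f = LinearMap.ker g)
    (hM : IsFgGorensteinProjective A M) (h'' : IsFgGorensteinProjective A M'') :
    IsFgGorensteinProjective A M' := by
  obtain ⟨C, ⟨e⟩⟩ := hM.exists_totallyAcyclicComplex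
  obtain ⟨D, ⟨e''⟩⟩ := h''.exists_totallyAcyclicComplex
  obtain ⟨φ, hφ, hφ₀⟩ := C.exists_chainMap (e''.toLinearMap ∘ₗ g ∘ₗ e.symm.toLinearMap)
  have hexact : Function.Exact (e.toLinearMap ∘ₗ f) (φ 0 ∘ₗ (ker (C.d 0)).subtype) := by
    rw [hφ₀, (ker (D.d 0)).injective_subtype.comp_exact_iff_exact,
      LinearEquiv.postcomp_exact_iff_exact, LinearEquiv.conj_exact_iff_exact]
    exact LinearMap.exact_iff.mpr hfg.symm
  have hsurj : range (e''.toLinearMap ∘ₗ g ∘ₗ e.symm.toLinearMap) = ⊤ := by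
    rw [LinearMap.range_eq_top]
    exact e''.surjective.comp (hg.comp e.symm.surjective)
  have hrange : range (D.d (-1)) ≤ range (φ 0 ∘ₗ (ker (C.d 0)).subtype) := by
    rw [hφ₀, LinearMap.range_comp_of_range_eq_top _ hsurj, Submodule.range_subtype]
    exact (D.range_d (-1)).le
  obtain ⟨ε⟩ := hexact.nonempty_prod_equiv_ker_coprod (e.injective.comp hf) hrange
  obtain ⟨κ⟩ := TotallyAcyclicComplex.nonempty_ker_cone_d_equiv φ hφ (-1)
  obtain ⟨C', ⟨e'⟩⟩ :=
    (TotallyAcyclicComplex.cone φ hφ).exists_equiv_ker_of_prod_equiv_ker (-1) (ε.trans κ.symm)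
  exact C'.isFgGorensteinProjective_of_equiv_ker (-1) e'

/-- The class of finitely generated Gorenstein-projective modules over an artin algebra
is closed under kernels of epimorphisms. -/
theorem isFgGorensteinProjective_of_kernel_of_epi
    (R : Type u) [CommRing R] [IsArtinianRing R]
    (A : Type u) [Ring A] [Algebra R A] [Module.Finite R A]
    (M' M M'' : Type u)
    [AddCommGroup M'] [Module A M'] [Module.Finite A M']
    [AddCommGroup M] [Module A M] [Module.Finite A M]
    [AddCommGroup M''] [Module A M''] [Module.Finite A M'']
    (f : M' →ₗ[A] M) (g : M →ₗ[A] M'')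
    (hf : Function.Injective f) (hg : Function.Surjective g)
    (hfg : LinearMap.range f = LinearMap.ker g)
    (hM : IsFgGorensteinProjective A M) (h'' : IsFgGorensteinProjective A M'') :
    IsFgGorensteinProjective A M' :=
  isFgGorensteinProjective_of_kernel_of_epi_general A M' M M'' f g hf hg hfg hM h''
end

section
/- Let A be an artin algebra and M a finitely generated Gorenstein-projective left A-module. If Ext^1_A(G, M) = 0 for every finitely generated Gorenstein-projective A-module G, then M is projective. (Thus the relatively projective-injective objects of the Frobenius exact category of finitely generated Gorenstein-projective modules are exactly the finitely generated projective modules.) -/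
open CategoryTheory DirectSum

universe u

theorem LinearMap.surjective_codRestrict_of_range_eq_ker {R X Y Z : Type*} [Semiring R]
    [AddCommMonoid X] [Module R X] [AddCommMonoid Y] [Module R Y] [AddCommMonoid Z] [Module R Z]
    {f : X →ₗ[R] Y} {g : Y →ₗ[R] Z} (hfg : LinearMap.range f = LinearMap.ker g) :
    Function.Surjective (f.codRestrict (LinearMap.ker g) fun x => hfg ▸ f.mem_range_self x) := by
  rw [← LinearMap.range_eq_top, LinearMap.range_codRestrict, hfg, Submodule.comap_subtype_self]

/-- The sequence is `0 → Z^0(P^•) → P^0 → Z^1(P^•) → 0` for a totally acyclic complex `P^•`;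
`Z^1(P^•)` is Gorenstein-projective via the shifted complex. -/
theorem IsFgGorensteinProjective.exists_shortExact_to_projective {A : Type u} [Ring A]
    {M : Type u} [AddCommGroup M] [Module A M] (hM : IsFgGorensteinProjective A M) :
    ∃ (P G : ModuleCat.{u} A) (ι : M →ₗ[A] P) (π : P →ₗ[A] G),
      Module.Finite A P ∧ Module.Projective A P ∧ IsFgGorensteinProjective A G ∧
      Function.Injective ι ∧ Function.Surjective π ∧ LinearMap.range ι = LinearMap.ker π := by
  obtain ⟨P, d, hfin, hproj, hexact, hlift, ⟨e⟩⟩ := hM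
  have hcosyzygy : IsFgGorensteinProjective A (LinearMap.ker (d 1).hom) :=
    ⟨fun n => P (n + 1), fun n => d (n + 1), fun n => hfin (n + 1), fun n => hproj (n + 1),
      fun n => hexact (n + 1),
      fun Q hQf hQp => ⟨fun n => (hlift Q hQf hQp).1 (n + 1), fun n => (hlift Q hQf hQp).2 (n + 1)⟩,
      ⟨LinearEquiv.refl _ _⟩⟩
  refine ⟨P 0, ModuleCat.of A (LinearMap.ker (d 1).hom),
    (LinearMap.ker (d 0).hom).subtype ∘ₗ e.toLinearMap,
    (d 0).hom.codRestrict _ fun x => hexact 0 ▸ (d 0).hom.mem_range_self x,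
    hfin 0, hproj 0, hcosyzygy, (Submodule.injective_subtype _).comp e.injective,
    LinearMap.surjective_codRestrict_of_range_eq_ker (hexact 0), ?_⟩
  rw [LinearMap.range_comp_of_range_eq_top _ e.range, Submodule.range_subtype,
    LinearMap.ker_codRestrict]

theorem projective_of_fgGorensteinProjective_of_ext_vanishing_general
    (A : Type u) [Ring A]
    (M : Type u) [AddCommGroup M] [Module A M]
    (hM : IsFgGorensteinProjective A M)
    (hExt : ∀ (G E : Type u) [AddCommGroup G] [Module A G] [AddCommGroup E] [Module A E],
      ∀ (_ : Module.Finite A E), IsFgGorensteinProjective A G →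
      ∀ (ι : M →ₗ[A] E) (π : E →ₗ[A] G),
        Function.Injective ι → Function.Surjective π →
        LinearMap.range ι = LinearMap.ker π →
        ∃ ρ : E →ₗ[A] M, ρ ∘ₗ ι = LinearMap.id) :
    Module.Projective A M := by
  obtain ⟨P, G, ι, π, hPfin, hPproj, hG, hι, hπ, hexact⟩ := hM.exists_shortExact_to_projective
  obtain ⟨ρ, hρ⟩ := hExt G P hPfin hG ι π hι hπ hexact
  exact Module.Projective.of_split ι ρ hρ

/-- If `M` is a finitely generated Gorenstein-projective module such that
`Ext^1_A(G, M) = 0` (equivalently: every short exact sequence `0 → M → E → G → 0` splits)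
for every finitely generated Gorenstein-projective module `G`, then `M` is projective. -/
theorem projective_of_fgGorensteinProjective_of_ext_vanishing
    (R : Type u) [CommRing R] [IsArtinianRing R]
    (A : Type u) [Ring A] [Algebra R A] [Module.Finite R A]
    (M : Type u) [AddCommGroup M] [Module A M] [Module.Finite A M]
    (hM : IsFgGorensteinProjective A M)
    (hExt : ∀ (G E : Type u) [AddCommGroup G] [Module A G] [AddCommGroup E] [Module A E],
      ∀ (_ : Module.Finite A E), IsFgGorensteinProjective A G →
      ∀ (ι : M →ₗ[A] E) (π : E →ₗ[A] G),
        Function.Injective ι → Function.Surjective π →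
        LinearMap.range ι = LinearMap.ker π →
        ∃ ρ : E →ₗ[A] M, ρ ∘ₗ ι = LinearMap.id) :
    Module.Projective A M :=
  projective_of_fgGorensteinProjective_of_ext_vanishing_general A M hM hExt
end
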